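/- arXiv:math/0006080 — 3 statements merged into one kernel-verified Lean document; each statement's English description precedes it below -/
import Mathlib

section
/- Let K be a finite extension of ℚ_p and Γ a discrete subgroup of PGL(2,K). Then Γ contains no parabolic element other than the identity: if A ∈ GL(2,K) satisfies (tr A)² = 4·det A and [A] ∈ Γ, then [A] = 1 in PGL(2,K). -/
open Matrix

abbrev GL2 (F : Type) [Field F] : Type := Matrix.GeneralLinearGroup (Fin 2) F

abbrev PGL2 (F : Type) [Field F] : Type := GL2 F ⧸ Subgroup.center (GL2 F)

def PGLmk (F : Type) [Field F] : GL2 F →* PGL2 F := QuotientGroup.mk' _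

/-!
If `(tr A)² = 4 det A`, then `A = λ (1 + M)` with `λ = tr A / 2 ≠ 0` and `M² = 0`, so `[A]` lies on
the one-parameter subgroup `t ↦ [1 + t M]` of `PGL(2, K)` and `[A] ^ pⁿ = [1 + pⁿ M]`. As `‖p‖ < 1`
these powers tend to the identity, so by discreteness one of them is trivial. But `1 + pⁿ M` is
scalar only if `M` is, and a square-zero scalar matrix vanishes; hence `[A] = 1`.
-/

open Filter Topology

theorem Filter.Tendsto.eventually_eq_of_discreteTopology {X ι : Type*} [TopologicalSpace X]
    {s : Set X} [DiscreteTopology s] {l : Filter ι} {f : ι → X} {a : X} (ha : a ∈ s)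
    (hf : ∀ i, f i ∈ s) (h : Tendsto f l (𝓝 a)) : ∀ᶠ i in l, f i = a := by
  have hs : Tendsto (fun i ↦ (⟨f i, hf i⟩ : s)) l (𝓝 ⟨a, ha⟩) := tendsto_subtype_rng.mpr h
  rw [nhds_discrete, tendsto_pure] at hs
  exact hs.mono fun i hi ↦ congrArg Subtype.val hi

section SqZero

variable {R A : Type*} [CommRing R] [Ring A] [Algebra R A] {N : A}

theorem one_add_smul_mul_one_add_smul (hN : N * N = 0) (s t : R) :
    (1 + s • N) * (1 + t • N) = 1 + (s + t) • N := by
  simp only [add_mul, mul_add, one_mul, mul_one, smul_mul_smul_comm, hN, smul_zero, add_smul]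
  abel

def sqZeroUnits (hN : N * N = 0) : Multiplicative R →* Aˣ where
  toFun t :=
    { val := 1 + t.toAdd • N
      inv := 1 + (-t.toAdd) • N
      val_inv := by rw [one_add_smul_mul_one_add_smul hN, add_neg_cancel, zero_smul, add_zero]
      inv_val := by rw [one_add_smul_mul_one_add_smul hN, neg_add_cancel, zero_smul, add_zero] }
  map_one' := by ext; simp
  map_mul' s t := by ext; simp [one_add_smul_mul_one_add_smul hN]

@[simp]
theorem val_sqZeroUnits (hN : N * N = 0) (t : Multiplicative R) :
    (sqZeroUnits hN t : A) = 1 + t.toAdd • N :=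
  rfl

theorem continuous_sqZeroUnits [TopologicalSpace R] [TopologicalSpace A] [ContinuousAdd A]
    [ContinuousNeg R] [ContinuousSMul R A] (hN : N * N = 0) :
    Continuous fun t : R ↦ sqZeroUnits hN (.ofAdd t) :=
  Units.continuous_iff.mpr
    ⟨continuous_const.add (continuous_id.smul continuous_const),
      continuous_const.add (continuous_neg.smul continuous_const)⟩

end SqZero

theorem Matrix.GeneralLinearGroup.eq_zero_of_sqZeroUnits_mem_center {n F : Type*} [Fintype n]
    [DecidableEq n] [Field F] {M : Matrix n n F} (hM : M * M = 0) {t : F} (ht : t ≠ 0)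
    (hcenter : sqZeroUnits hM (.ofAdd t) ∈ Subgroup.center (GL n F)) : M = 0 := by
  obtain ⟨d, hd⟩ := mem_center_iff_val_mem_range_scalar.mp hcenter
  rw [val_sqZeroUnits, toAdd_ofAdd, Matrix.scalar_apply, ← smul_one_eq_diagonal] at hd
  have hscalar : M = (t⁻¹ * (d - 1)) • (1 : Matrix n n F) := by
    rw [mul_smul, sub_smul, hd, one_smul, add_sub_cancel_left, inv_smul_smul₀ ht]
  have hsmul : (t⁻¹ * (d - 1)) • M = 0 := by
    rw [← smul_one_mul, ← hscalar, hM]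
  rcases smul_eq_zero.mp hsmul with h | h
  · rw [hscalar, h, zero_smul]
  · exact h

theorem Matrix.two_smul_sub_trace_smul_one_mul_self {R : Type*} [CommRing R]
    (A : Matrix (Fin 2) (Fin 2) R) :
    ((2 : R) • A - A.trace • 1) * ((2 : R) • A - A.trace • 1) =
      (A.trace ^ 2 - 4 * A.det) • 1 := by
  rw [Matrix.trace_fin_two, Matrix.det_fin_two]
  ext i j
  fin_cases i <;> fin_cases j <;>
    simp [Matrix.mul_apply, Fin.sum_univ_two, Matrix.one_apply] <;> ring

theorem PGLmk_eq_one_iff {F : Type} [Field F] {g : GL2 F} :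
    PGLmk F g = 1 ↔ g ∈ Subgroup.center (GL2 F) :=
  QuotientGroup.eq_one_iff g

theorem exists_PGLmk_sqZeroUnits_eq {F : Type} [Field F] [NeZero (2 : F)] (A : GL2 F)
    (hpar : (A : Matrix (Fin 2) (Fin 2) F).trace ^ 2 = 4 * (A : Matrix (Fin 2) (Fin 2) F).det) :
    ∃ (M : Matrix (Fin 2) (Fin 2) F) (hM : M * M = 0),
      PGLmk F (sqZeroUnits hM (.ofAdd (1 : F))) = PGLmk F A := by
  set t := (A : Matrix (Fin 2) (Fin 2) F).trace
  have ht : t ≠ 0 := by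
    have h4 : (4 : F) ≠ 0 := by
      rw [show (4 : F) = 2 * 2 by norm_num]
      exact mul_ne_zero two_ne_zero two_ne_zero
    rw [← pow_ne_zero_iff two_ne_zero, hpar]
    exact mul_ne_zero h4 A.det_ne_zero
  set N := (2 : F) • (A : Matrix (Fin 2) (Fin 2) F) - t • 1
  have hM : (t⁻¹ • N) * (t⁻¹ • N) = 0 := by
    rw [smul_mul_smul_comm, Matrix.two_smul_sub_trace_smul_one_mul_self, hpar, sub_self,
      zero_smul, smul_zero]
  refine ⟨t⁻¹ • N, hM, ?_⟩
  have hc : t / 2 ≠ 0 := div_ne_zero ht two_ne_zero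
  have hdecomp : Matrix.GeneralLinearGroup.scalar (Fin 2) (Units.mk0 (t / 2) hc) *
      sqZeroUnits hM (.ofAdd (1 : F)) = A := by
    ext : 1
    rw [Units.val_mul, Matrix.GeneralLinearGroup.coe_scalar, Units.val_mk0, val_sqZeroUnits,
      toAdd_ofAdd, one_smul, Matrix.scalar_apply, ← smul_one_eq_diagonal, smul_one_mul]
    match_scalars <;> field_simp
    ring
  have hcenter : Matrix.GeneralLinearGroup.scalar (Fin 2) (Units.mk0 (t / 2) hc) ∈
      Subgroup.center (GL2 F) := by
    rw [Matrix.GeneralLinearGroup.center_eq_range_scalar]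
    exact ⟨_, rfl⟩
  rw [← hdecomp, map_mul, PGLmk_eq_one_iff.mpr hcenter, one_mul]

theorem norm_natCast_eq_inv_of_norm_algebraMap {p : ℕ} [Fact p.Prime] {K : Type*}
    [NormedField K] [Algebra ℚ_[p] K] (hnorm : ∀ x : ℚ_[p], ‖algebraMap ℚ_[p] K x‖ = ‖x‖) :
    ‖(p : K)‖ = (p : ℝ)⁻¹ := by
  rw [← map_natCast (algebraMap ℚ_[p] K), hnorm, Padic.norm_p]

theorem stmt0_general (p : ℕ) [Fact p.Prime] (K : Type) [NormedField K] [Algebra ℚ_[p] K]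
    (hnorm : ∀ x : ℚ_[p], ‖algebraMap ℚ_[p] K x‖ = ‖x‖)
    (Γ : Subgroup (PGL2 K)) (hΓ : DiscreteTopology Γ)
    (A : GL2 K)
    (hpar : (Matrix.trace (A : Matrix (Fin 2) (Fin 2) K)) ^ 2
      = 4 * Matrix.det (A : Matrix (Fin 2) (Fin 2) K))
    (hmem : PGLmk K A ∈ Γ) :
    PGLmk K A = 1 := by
  have : CharZero K := charZero_of_injective_algebraMap (algebraMap ℚ_[p] K).injective
  obtain ⟨M, hM, hA⟩ := exists_PGLmk_sqZeroUnits_eq A hpar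
  have hp := norm_natCast_eq_inv_of_norm_algebraMap (K := K) hnorm
  have hp1 : (1 : ℝ) < p := by exact_mod_cast (Fact.out : p.Prime).one_lt
  let u : K → PGL2 K := fun t ↦ PGLmk K (sqZeroUnits hM (.ofAdd t))
  have hpow : ∀ n : ℕ, u ((p : K) ^ n) = PGLmk K A ^ p ^ n := fun n ↦ by
    rw [← hA, ← map_pow, ← map_pow, ← ofAdd_nsmul, nsmul_eq_mul, mul_one, Nat.cast_pow]
  have hlim : Tendsto (fun n : ℕ ↦ u ((p : K) ^ n)) atTop (𝓝 1) := by
    have hu : Continuous u := QuotientGroup.continuous_mk.comp (continuous_sqZeroUnits hM)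
    have hu0 : u 0 = 1 := by simp [u]
    rw [← hu0]
    exact (hu.tendsto 0).comp
      (tendsto_pow_atTop_nhds_zero_of_norm_lt_one (hp ▸ inv_lt_one_of_one_lt₀ hp1))
  obtain ⟨n, hn⟩ := (hlim.eventually_eq_of_discreteTopology (s := Γ) Γ.one_mem
    fun n ↦ hpow n ▸ Γ.pow_mem hmem _).exists
  have hM0 : M = 0 := Matrix.GeneralLinearGroup.eq_zero_of_sqZeroUnits_mem_center hM
    (pow_ne_zero n (norm_ne_zero_iff.mp (by rw [hp]; positivity))) (PGLmk_eq_one_iff.mp hn)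
  subst hM0
  rw [← hA, show sqZeroUnits hM (.ofAdd (1 : K)) = 1 from Units.ext (by simp), map_one]

theorem stmt0 (p : ℕ) [Fact p.Prime] (K : Type) [NormedField K] [Algebra ℚ_[p] K]
    [FiniteDimensional ℚ_[p] K]
    (hnorm : ∀ x : ℚ_[p], ‖algebraMap ℚ_[p] K x‖ = ‖x‖)
    (Γ : Subgroup (PGL2 K)) (hΓ : DiscreteTopology Γ)
    (A : GL2 K)
    (hpar : (Matrix.trace (A : Matrix (Fin 2) (Fin 2) K)) ^ 2
      = 4 * Matrix.det (A : Matrix (Fin 2) (Fin 2) K))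
    (hmem : PGLmk K A ∈ Γ) :
    PGLmk K A = 1 :=
  stmt0_general p K hnorm Γ hΓ A hpar hmem
end

section
/- Let K be a finite extension of ℚ_p and Γ a discrete subgroup of PGL(2,K). Then no two elements of Γ have exactly one common fixed point in P¹(K): if γ, θ ∈ Γ, γ ≠ 1, θ ≠ 1, have a common fixed point x ∈ P¹(K), then they have a second common fixed point y ∈ P¹(K) with y ≠ x. -/
open Matrix

/-- The action of `GL(2,F)` on the projective line `P¹(F)`. -/
noncomputable def projAct {F : Type} [Field F] (A : GL2 F) :
    Projectivization F (Fin 2 → F) → Projectivization F (Fin 2 → F) :=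
  Projectivization.map ((Matrix.GeneralLinearGroup.toLin A).toLinearEquiv :
      (Fin 2 → F) →ₗ[F] (Fin 2 → F))
    (Matrix.GeneralLinearGroup.toLin A).toLinearEquiv.injective

/-- `x ∈ P¹(F)` is a fixed point of the element `g` of `PGL(2,F)`. -/
def FixedPt {F : Type} [Field F] (g : PGL2 F) (x : Projectivization F (Fin 2 → F)) : Prop :=
  ∀ A : GL2 F, PGLmk F A = g → projAct A x = x

open Filter

section helpers
variable {K : Type} [Field K]

lemma det_sub_smul (M : Matrix (Fin 2) (Fin 2) K) (c : K) :
    (M - c • 1).det = M.det - c * M.trace + c ^ 2 := by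
  simp [Matrix.det_fin_two, Matrix.trace_fin_two, Matrix.sub_apply, Matrix.smul_apply,
    Matrix.one_apply]
  ring

lemma unip {M : Matrix (Fin 2) (Fin 2) K} {v : Fin 2 → K} {lam : K} (hlam : lam ≠ 0)
    (hv : v ≠ 0) (hMv : M *ᵥ v = lam • v) (hdet : M.det = lam ^ 2) :
    (M - lam • 1) * (M - lam • 1) = 0 := by
  have h0 : (M - lam • 1).det = 0 := by
    rw [← Matrix.exists_mulVec_eq_zero_iff]
    exact ⟨v, hv, by rw [Matrix.sub_mulVec, hMv, Matrix.smul_mulVec, Matrix.one_mulVec,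
      sub_self]⟩
  rw [det_sub_smul, hdet] at h0
  have htr : M 0 0 + M 1 1 = 2 * lam := by
    have hl : lam * (2 * lam - M.trace) = 0 := by linear_combination h0
    rcases mul_eq_zero.mp hl with h | h
    · exact absurd h hlam
    · rw [Matrix.trace_fin_two] at h; linear_combination -h
  have hdet2 : M 0 0 * M 1 1 - M 0 1 * M 1 0 = lam ^ 2 := by
    rw [← Matrix.det_fin_two]; exact hdet
  ext i j
  fin_cases i <;> fin_cases j <;>
    simp [Matrix.mul_apply, Fin.sum_univ_two, Matrix.sub_apply, Matrix.smul_apply,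
      Matrix.one_apply]
  · linear_combination M 0 0 * htr - hdet2
  · linear_combination M 0 1 * htr
  · linear_combination M 1 0 * htr
  · linear_combination M 1 1 * htr - hdet2

lemma parallel {u w : Fin 2 → K} (hw : w ≠ 0) (h : u 0 * w 1 = u 1 * w 0) :
    ∃ c : K, u = c • w := by
  have hw' : w 0 ≠ 0 ∨ w 1 ≠ 0 := by
    by_contra hc
    push_neg at hc
    exact hw (funext fun i => by fin_cases i <;> simp [hc.1, hc.2])
  rcases hw' with h0 | h1
  · refine ⟨u 0 / w 0, funext fun i => ?_⟩
    fin_cases i <;> simp [Pi.smul_apply] <;> field_simp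
    linear_combination -h
  · refine ⟨u 1 / w 1, funext fun i => ?_⟩
    fin_cases i <;> simp [Pi.smul_apply] <;> field_simp
    linear_combination h

lemma eig_parallel {A : Matrix (Fin 2) (Fin 2) K} {v w u : Fin 2 → K} {lam del : K}
    (hv : v ≠ 0) (hld : lam ≠ del) (hAv : A *ᵥ v = lam • v) (hAw : A *ᵥ w = del • w)
    (hAu : A *ᵥ u = del • u) : u 0 * w 1 = u 1 * w 0 := by
  by_contra hD
  have hD' : u 0 * w 1 - u 1 * w 0 ≠ 0 := sub_ne_zero.mpr hD
  set D := u 0 * w 1 - u 1 * w 0 with hDdef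
  have hvrep : v = ((v 0 * w 1 - v 1 * w 0) / D) • u + ((u 0 * v 1 - u 1 * v 0) / D) • w := by
    funext i
    fin_cases i <;> simp [Pi.smul_apply] <;> field_simp <;> ring
  have hAv2 : A *ᵥ v = del • v := by
    rw [hvrep, Matrix.mulVec_add, Matrix.mulVec_smul, Matrix.mulVec_smul, hAu, hAw,
      smul_comm _ del, smul_comm _ del, ← smul_add]
  have : (lam - del) • v = 0 := by
    rw [sub_smul, ← hAv, hAv2, sub_self]
  rcases smul_eq_zero.mp this with h | h
  · exact hld (sub_eq_zero.mp h)
  · exact hv h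

end helpers
section glhelpers
variable {K : Type} [Field K]

def scalarUnit (c : K) (hc : c ≠ 0) : GL2 K :=
  ⟨c • 1, c⁻¹ • 1, by simp [Matrix.smul_mul, Matrix.mul_smul, smul_smul, hc], by
    simp [Matrix.smul_mul, Matrix.mul_smul, smul_smul, hc]⟩

lemma scalarUnit_mem_center (c : K) (hc : c ≠ 0) :
    scalarUnit c hc ∈ Subgroup.center (GL2 K) := by
  rw [Subgroup.mem_center_iff]
  intro g
  apply Units.ext
  rw [Units.val_mul, Units.val_mul]
  show (g.val * (c • 1) : Matrix (Fin 2) (Fin 2) K) = (c • 1) * g.val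
  simp [Matrix.mul_smul, Matrix.smul_mul]

lemma val_ne_zero_entry (z : GL2 K) (h : z.val = 0) : False := by
  have := z.val_inv
  rw [h, zero_mul] at this
  have h00 := congrFun (congrFun this 0) 0
  simp [Matrix.one_apply] at h00

lemma center_scalar {z : GL2 K} (hz : z ∈ Subgroup.center (GL2 K)) :
    ∃ c : K, c ≠ 0 ∧ z.val = c • 1 := by
  have hz' := Subgroup.mem_center_iff.mp hz
  set T1 : GL2 K := ⟨!![1, 1; 0, 1], !![1, -1; 0, 1],
    by simp [Matrix.mul_fin_two, Matrix.one_fin_two],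
    by simp [Matrix.mul_fin_two, Matrix.one_fin_two]⟩ with hT1
  set T2 : GL2 K := ⟨!![1, 0; 1, 1], !![1, 0; -1, 1],
    by simp [Matrix.mul_fin_two, Matrix.one_fin_two],
    by simp [Matrix.mul_fin_two, Matrix.one_fin_two]⟩ with hT2
  have h1 : T1.val * z.val = z.val * T1.val := congrArg Units.val (hz' T1)
  have h2 : T2.val * z.val = z.val * T2.val := congrArg Units.val (hz' T2)
  set M := z.val with hM
  have e1 : ∀ i j, (T1.val * M) i j = (M * T1.val) i j := fun i j => by rw [h1]
  have e2 : ∀ i j, (T2.val * M) i j = (M * T2.val) i j := fun i j => by rw [h2]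
  have c10 : M 1 0 = 0 := by
    have := e1 0 0
    simpa [hT1, Matrix.mul_apply, Fin.sum_univ_two] using this
  have c01 : M 0 1 = 0 := by
    have := e2 1 1
    simpa [hT2, Matrix.mul_apply, Fin.sum_univ_two] using this
  have cdiag : M 0 0 = M 1 1 := by
    have := e1 0 1
    simp [hT1, Matrix.mul_apply, Fin.sum_univ_two, c10] at this
    linear_combination -this
  refine ⟨M 0 0, fun h0 => ?_, ?_⟩
  · exact val_ne_zero_entry z (by
      ext i j
      fin_cases i <;> fin_cases j <;>
        simp [← hM, c10, c01, h0, ← cdiag, h0])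
  · ext i j
    fin_cases i <;> fin_cases j <;>
      simp [← hM, Matrix.smul_apply, Matrix.one_apply, c10, c01, ← cdiag]

lemma pgl_eq_iff (A B : GL2 K) :
    PGLmk K A = PGLmk K B ↔ ∃ z ∈ Subgroup.center (GL2 K), A * z = B :=
  QuotientGroup.mk'_eq_mk' _

lemma inv_eig {A : GL2 K} {v : Fin 2 → K} {lam : K} (hlam : lam ≠ 0)
    (h : A.val *ᵥ v = lam • v) : (A⁻¹).val *ᵥ v = lam⁻¹ • v := by
  have h2 : (A⁻¹).val *ᵥ (A.val *ᵥ v) = v := by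
    rw [Matrix.mulVec_mulVec]
    have : ((A⁻¹).val : Matrix (Fin 2) (Fin 2) K) * A.val = 1 := by
      rw [← Units.val_mul, inv_mul_cancel, Units.val_one]
    rw [this, Matrix.one_mulVec]
  rw [h, Matrix.mulVec_smul] at h2
  have := congrArg (fun u => lam⁻¹ • u) h2
  simp only [smul_smul, inv_mul_cancel₀ hlam, one_smul] at this
  exact this

lemma fixed_of_eig (g : PGL2 K) (A : GL2 K) (hA : PGLmk K A = g) (w : Fin 2 → K) (hw : w ≠ 0)
    (mu : K) (hmu : mu ≠ 0) (he : A.val *ᵥ w = mu • w) :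
    FixedPt g (Projectivization.mk K w hw) := by
  intro A' hA'
  obtain ⟨z, hzc, hz⟩ := (pgl_eq_iff A A').mp (hA.trans hA'.symm)
  obtain ⟨c, hc0, hcz⟩ := center_scalar hzc
  have he' : A'.val *ᵥ w = (mu * c) • w := by
    rw [← hz, Units.val_mul, hcz, ← Matrix.mulVec_mulVec, Matrix.smul_mulVec,
      Matrix.one_mulVec, Matrix.mulVec_smul, he, smul_smul, mul_comm]
  show Projectivization.map _ _ _ = _
  rw [Projectivization.map_mk]
  rw [Projectivization.mk_eq_mk_iff']
  exact ⟨mu * c, by rw [← he']; rfl⟩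

lemma eig_of_fixed (g : PGL2 K) (x : Projectivization K (Fin 2 → K)) (hfix : FixedPt g x)
    (A : GL2 K) (hA : PGLmk K A = g) :
    ∃ mu : K, mu ≠ 0 ∧ A.val *ᵥ x.rep = mu • x.rep := by
  have h := hfix A hA
  rw [← Projectivization.mk_rep x] at h
  have h2 : Projectivization.mk K (A.val *ᵥ x.rep)
      (by
        intro h0
        apply x.rep_nonzero
        have hrw : x.rep = (A⁻¹).val *ᵥ (A.val *ᵥ x.rep) := by
          rw [Matrix.mulVec_mulVec, ← Units.val_mul, inv_mul_cancel, Units.val_one,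
            Matrix.one_mulVec]
        rw [hrw, h0, Matrix.mulVec_zero]) =
      Projectivization.mk K x.rep x.rep_nonzero := by
    rw [← h]
    show _ = Projectivization.map _ _ _
    rw [Projectivization.map_mk]
    rfl
  rw [Projectivization.mk_eq_mk_iff] at h2
  obtain ⟨a, ha⟩ := h2
  exact ⟨a, a.ne_zero, ha.symm⟩

end glhelpers
section parab
open MulOpposite
variable {K : Type} [NormedField K]

lemma pow_unip {N : Matrix (Fin 2) (Fin 2) K} (hN2 : N * N = 0) (m : ℕ) :
    ((1 : Matrix (Fin 2) (Fin 2) K) + N) ^ m = 1 + (m : K) • N := by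
  induction m with
  | zero => simp
  | succ n ih =>
    rw [pow_succ, ih]
    push_cast
    simp only [mul_add, add_mul, Matrix.smul_mul, hN2, smul_zero, mul_one, one_mul]
    module

lemma tendsto_one_add_smul {N : Matrix (Fin 2) (Fin 2) K} {c : K} (hc : ‖c‖ < 1) :
    Filter.Tendsto (fun n : ℕ => (1 : Matrix (Fin 2) (Fin 2) K) + c ^ n • N) Filter.atTop
      (nhds 1) := by
  have h0 : Filter.Tendsto (fun n : ℕ => c ^ n) Filter.atTop (nhds 0) :=
    tendsto_pow_atTop_nhds_zero_of_norm_lt_one hc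
  have := (h0.smul_const N).const_add (1 : Matrix (Fin 2) (Fin 2) K)
  simpa using this

lemma no_parabolic (p : ℕ) [Fact p.Prime] [Algebra ℚ_[p] K]
    (hnorm : ∀ x : ℚ_[p], ‖algebraMap ℚ_[p] K x‖ = ‖x‖)
    (Γ : Subgroup (PGL2 K)) (hΓ : DiscreteTopology Γ)
    (g : PGL2 K) (hg : g ∈ Γ) (A : GL2 K) (hA : PGLmk K A = g)
    (N : Matrix (Fin 2) (Fin 2) K) (hval : A.val = 1 + N) (hN2 : N * N = 0) (hN : N ≠ 0) :
    False := by
  have hpnorm : ‖(p : K)‖ = (p : ℝ)⁻¹ := by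
    have hcast : (p : K) = algebraMap ℚ_[p] K (p : ℚ_[p]) := by rw [map_natCast]
    rw [hcast, hnorm, Padic.norm_p]
  have hp1 : ‖(p : K)‖ < 1 := by
    rw [hpnorm, inv_lt_one_iff₀]
    right
    exact_mod_cast (Fact.out : p.Prime).one_lt
  have hpK : (p : K) ≠ 0 := by
    rw [← norm_ne_zero_iff, hpnorm]
    exact inv_ne_zero (Nat.cast_ne_zero.mpr (Fact.out : p.Prime).ne_zero)
  -- powers of A
  have hApow : ∀ n : ℕ, (A ^ n).val = 1 + (n : K) • N := by
    intro n
    rw [← pow_unip hN2 n, ← hval]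
    exact (Units.val_pow_eq_pow_val A n).symm ▸ rfl
  have hAinv : (A⁻¹).val = 1 + (-N) := by
    have hmul : A.val * (1 + (-N)) = 1 := by
      rw [hval]
      simp only [mul_add, add_mul, mul_one, one_mul, mul_neg, hN2, neg_zero]
      abel
    calc (A⁻¹).val = (A⁻¹).val * (A.val * (1 + (-N))) := by rw [hmul, mul_one]
      _ = ((A⁻¹).val * A.val) * (1 + (-N)) := by rw [mul_assoc]
      _ = 1 + (-N) := by
          rw [← Units.val_mul, inv_mul_cancel, Units.val_one, one_mul]
  have hAinvpow : ∀ n : ℕ, ((A ^ n)⁻¹).val = 1 + (n : K) • (-N) := by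
    intro n
    rw [← inv_pow]
    have h2 : (-N) * (-N) = 0 := by rw [neg_mul_neg, hN2]
    rw [← pow_unip h2 n, ← hAinv]
    exact (Units.val_pow_eq_pow_val A⁻¹ n).symm ▸ rfl
  -- the sequence in Γ
  have hmem : ∀ n : ℕ, PGLmk K (A ^ p ^ n) ∈ Γ := by
    intro n
    rw [map_pow, hA]
    exact pow_mem hg (p ^ n)
  set s : ℕ → Γ := fun n => ⟨PGLmk K (A ^ p ^ n), hmem n⟩ with hs
  -- convergence of the GL2 sequence
  have hGL : Filter.Tendsto (fun n : ℕ => A ^ p ^ n) Filter.atTop (nhds 1) := by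
    apply (Units.isEmbedding_embedProduct).tendsto_nhds_iff.mpr
    have hval_t : Filter.Tendsto (fun n : ℕ => (A ^ p ^ n).val) Filter.atTop
        (nhds (1 : Matrix (Fin 2) (Fin 2) K)) := by
      have := tendsto_one_add_smul (N := N) hp1
      apply this.congr
      intro n
      rw [hApow]
      push_cast
      rfl
    have hinv_t : Filter.Tendsto (fun n : ℕ => ((A ^ p ^ n)⁻¹).val) Filter.atTop
        (nhds (1 : Matrix (Fin 2) (Fin 2) K)) := by
      have := tendsto_one_add_smul (N := -N) hp1
      apply this.congr
      intro n
      rw [hAinvpow]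
      push_cast
      rfl
    have : Filter.Tendsto (fun n : ℕ => ((A ^ p ^ n).val,
        op ((A ^ p ^ n)⁻¹).val)) Filter.atTop (nhds ((1 : Matrix (Fin 2) (Fin 2) K),
          op (1 : Matrix (Fin 2) (Fin 2) K))) :=
      hval_t.prodMk_nhds ((MulOpposite.continuous_op.tendsto _).comp hinv_t)
    exact this
  -- convergence in PGL2 and in Γ
  have hPGL : Filter.Tendsto (fun n : ℕ => PGLmk K (A ^ p ^ n)) Filter.atTop (nhds 1) := by
    have hc : Continuous (PGLmk K) := continuous_quot_mk
    have := (hc.tendsto 1).comp hGL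
    simpa only [Function.comp_def, _root_.map_one] using this
  have hsT : Filter.Tendsto s Filter.atTop (nhds (1 : Γ)) := tendsto_subtype_rng.mpr hPGL
  rw [nhds_discrete] at hsT
  obtain ⟨n, hn⟩ := (Filter.tendsto_pure.mp hsT).exists
  -- so A ^ p ^ n is central, hence scalar
  have hcent : (A ^ p ^ n : GL2 K) ∈ Subgroup.center (GL2 K) := by
    have : PGLmk K (A ^ p ^ n) = 1 := congrArg Subtype.val hn
    exact (QuotientGroup.eq_one_iff _).mp this
  obtain ⟨c, hc0, hcv⟩ := center_scalar hcent
  rw [hApow (p ^ n)] at hcv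
  -- N = scalar, N*N = 0 forces N = 0
  have hpn : ((p : K) ^ n : K) ≠ 0 := pow_ne_zero _ hpK
  have hpn' : ((p ^ n : ℕ) : K) ≠ 0 := by push_cast; exact hpn
  have hNs : N = (((p ^ n : ℕ) : K))⁻¹ • ((c - 1) • (1 : Matrix (Fin 2) (Fin 2) K)) := by
    have : ((p ^ n : ℕ) : K) • N = (c - 1) • (1 : Matrix (Fin 2) (Fin 2) K) := by
      rw [sub_smul, one_smul, ← hcv]
      abel
    rw [← this, smul_smul, inv_mul_cancel₀ hpn', one_smul]
  set a : K := (((p ^ n : ℕ) : K))⁻¹ * (c - 1) with ha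
  have hNs' : N = a • (1 : Matrix (Fin 2) (Fin 2) K) := by rw [hNs, smul_smul]
  have ha2 : a • a • (1 : Matrix (Fin 2) (Fin 2) K) = 0 := by
    have h := hN2
    rw [hNs', Matrix.smul_mul, one_mul] at h
    exact h
  have ha0 : a = 0 := by
    have h := congrFun (congrFun ha2 0) 0
    simp [Matrix.smul_apply, Matrix.one_apply] at h
    exact h
  exact hN (by rw [hNs', ha0, zero_smul])

end parab

theorem stmt2 (p : ℕ) [Fact p.Prime] (K : Type) [NormedField K] [Algebra ℚ_[p] K]
    [FiniteDimensional ℚ_[p] K]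
    (hnorm : ∀ x : ℚ_[p], ‖algebraMap ℚ_[p] K x‖ = ‖x‖)
    (Γ : Subgroup (PGL2 K)) (hΓ : DiscreteTopology Γ)
    (γ θ : PGL2 K) (hγ : γ ∈ Γ) (hθ : θ ∈ Γ) (hγ1 : γ ≠ 1) (hθ1 : θ ≠ 1)
    (x : Projectivization K (Fin 2 → K)) (hxγ : FixedPt γ x) (hxθ : FixedPt θ x) :
    ∃ y : Projectivization K (Fin 2 → K), y ≠ x ∧ FixedPt γ y ∧ FixedPt θ y := by
  obtain ⟨A, hA⟩ := QuotientGroup.mk'_surjective (Subgroup.center (GL2 K)) γ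
  obtain ⟨B, hB⟩ := QuotientGroup.mk'_surjective (Subgroup.center (GL2 K)) θ
  have hA : PGLmk K A = γ := hA
  have hB : PGLmk K B = θ := hB
  have hv : x.rep ≠ 0 := x.rep_nonzero
  obtain ⟨lam, hlam0, hAv⟩ := eig_of_fixed γ x hxγ A hA
  obtain ⟨mu, hmu0, hBv⟩ := eig_of_fixed θ x hxθ B hB
  have hdetA : A.val.det ≠ 0 := by
    have ha : A.val.det * (A⁻¹).val.det = 1 := by
      rw [← Matrix.det_mul, ← Units.val_mul, mul_inv_cancel, Units.val_one, Matrix.det_one]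
    intro h0; rw [h0, zero_mul] at ha; exact zero_ne_one ha
  by_cases hcomm : A.val * B.val = B.val * A.val
  · -- commuting case
    have h1 : (A.val - lam • 1).det = 0 := by
      rw [← Matrix.exists_mulVec_eq_zero_iff]
      exact ⟨x.rep, hv, by rw [Matrix.sub_mulVec, hAv, Matrix.smul_mulVec,
        Matrix.one_mulVec, sub_self]⟩
    rw [det_sub_smul] at h1
    set del := A.val.trace - lam with hdel
    by_cases hld : lam = del
    · -- repeated eigenvalue: A is (scalar times) unipotent, contradiction
      exfalso
      have hdetsq : A.val.det = lam ^ 2 := by linear_combination h1 - lam * hld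
      have hU := unip hlam0 hv hAv hdetsq
      have hlaminv : lam⁻¹ ≠ 0 := inv_ne_zero hlam0
      set A' : GL2 K := scalarUnit lam⁻¹ hlaminv * A with hA'def
      have hA'val : A'.val = lam⁻¹ • A.val := by
        rw [hA'def, Units.val_mul]
        show (lam⁻¹ • 1 : Matrix (Fin 2) (Fin 2) K) * A.val = _
        rw [Matrix.smul_mul, one_mul]
      have hA'γ : PGLmk K A' = γ := by
        rw [hA'def, _root_.map_mul, ← hA]
        have h1' : PGLmk K (scalarUnit lam⁻¹ hlaminv) = 1 :=
          (QuotientGroup.eq_one_iff _).mpr (scalarUnit_mem_center _ _)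
        rw [h1', one_mul]
      set N : Matrix (Fin 2) (Fin 2) K := A'.val - 1 with hNdef
      have hN2 : N * N = 0 := by
        have hNe : N = lam⁻¹ • (A.val - lam • 1) := by
          rw [hNdef, hA'val, smul_sub, smul_smul, inv_mul_cancel₀ hlam0, one_smul]
        rw [hNe, Matrix.smul_mul, Matrix.mul_smul, hU, smul_zero, smul_zero]
      by_cases hN0 : N = 0
      · apply hγ1
        have hAs : A = scalarUnit lam hlam0 := by
          apply Units.ext
          show A.val = lam • 1
          have hval1 : A'.val = 1 := by rw [← sub_eq_zero]; exact hN0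
          rw [hA'val] at hval1
          calc A.val = lam • (lam⁻¹ • A.val) := by
                rw [smul_smul, mul_inv_cancel₀ hlam0, one_smul]
            _ = lam • 1 := by rw [hval1]
        rw [← hA, hAs]
        exact (QuotientGroup.eq_one_iff _).mpr (scalarUnit_mem_center _ _)
      · exact no_parabolic p hnorm Γ hΓ γ hγ A' hA'γ N (by rw [hNdef]; abel) hN2 hN0
    · -- distinct eigenvalues
      have hdel0 : del ≠ 0 := by
        intro h0
        apply hdetA
        have hdd : A.val.det = lam * del := by rw [hdel]; linear_combination h1
        rw [hdd, h0, mul_zero]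
      have h2 : (A.val - del • 1).det = 0 := by
        rw [det_sub_smul, hdel]
        linear_combination h1
      obtain ⟨w, hw0, hww⟩ := Matrix.exists_mulVec_eq_zero_iff.mpr h2
      have hAw : A.val *ᵥ w = del • w := by
        rw [Matrix.sub_mulVec, Matrix.smul_mulVec, Matrix.one_mulVec, sub_eq_zero] at hww
        exact hww
      have hBw : A.val *ᵥ (B.val *ᵥ w) = del • (B.val *ᵥ w) := by
        rw [Matrix.mulVec_mulVec, hcomm, ← Matrix.mulVec_mulVec, hAw, Matrix.mulVec_smul]
      have hpar := eig_parallel hv hld hAv hAw hBw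
      obtain ⟨c, hc⟩ := parallel hw0 hpar
      have hBw0 : B.val *ᵥ w ≠ 0 := by
        intro h0
        apply hw0
        have hrw : w = (B⁻¹).val *ᵥ (B.val *ᵥ w) := by
          rw [Matrix.mulVec_mulVec, ← Units.val_mul, inv_mul_cancel, Units.val_one,
            Matrix.one_mulVec]
        rw [hrw, h0, Matrix.mulVec_zero]
      have hc0 : c ≠ 0 := by intro h0; apply hBw0; rw [hc, h0, zero_smul]
      refine ⟨Projectivization.mk K w hw0, ?_, fixed_of_eig γ A hA w hw0 del hdel0 hAw,
        fixed_of_eig θ B hB w hw0 c hc0 hc⟩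
      intro heq
      rw [← Projectivization.mk_rep x, Projectivization.mk_eq_mk_iff] at heq
      obtain ⟨a, haw⟩ := heq
      have haw' : (a : K) • x.rep = w := by rw [← haw, Units.smul_def]
      have hlw : A.val *ᵥ w = lam • w := by
        rw [← haw', Matrix.mulVec_smul, hAv, smul_comm]
      have hz : (del - lam) • w = 0 := by rw [sub_smul, ← hAw, hlw, sub_self]
      rcases smul_eq_zero.mp hz with h | h
      · exact hld (sub_eq_zero.mp h).symm
      · exact hw0 h
  · -- non-commuting: commutator is parabolic, contradiction
    exfalso
    set C : GL2 K := A * B * A⁻¹ * B⁻¹ with hC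
    have hAiv := inv_eig hlam0 hAv
    have hBiv := inv_eig hmu0 hBv
    have hCval : C.val = A.val * (B.val * ((A⁻¹).val * (B⁻¹).val)) := by
      rw [hC]
      simp only [Units.val_mul]
      rw [mul_assoc, mul_assoc]
    have hCv : C.val *ᵥ x.rep = x.rep := by
      rw [hCval, ← Matrix.mulVec_mulVec, ← Matrix.mulVec_mulVec, ← Matrix.mulVec_mulVec, hBiv]
      simp only [Matrix.mulVec_smul]
      rw [hAiv]
      simp only [Matrix.mulVec_smul]
      rw [hBv]
      simp only [Matrix.mulVec_smul]
      rw [hAv, smul_smul, smul_smul, smul_smul]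
      rw [show mu⁻¹ * lam⁻¹ * mu * lam = 1 by field_simp, one_smul]
    have hdetC : C.val.det = 1 := by
      have ha : A.val.det * (A⁻¹).val.det = 1 := by
        rw [← Matrix.det_mul, ← Units.val_mul, mul_inv_cancel, Units.val_one, Matrix.det_one]
      have hb : B.val.det * (B⁻¹).val.det = 1 := by
        rw [← Matrix.det_mul, ← Units.val_mul, mul_inv_cancel, Units.val_one, Matrix.det_one]
      rw [hC]
      simp only [Units.val_mul, Matrix.det_mul]
      linear_combination (B.val.det * (B⁻¹).val.det) * ha + hb
    have hU := unip (one_ne_zero (α := K)) hv (by rw [hCv, one_smul]) (by rw [hdetC, one_pow])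
    set N : Matrix (Fin 2) (Fin 2) K := C.val - 1 with hNdef
    have hN2 : N * N = 0 := by
      have h := hU
      rw [one_smul] at h
      exact h
    have hN0 : N ≠ 0 := by
      intro h0
      apply hcomm
      have hC1 : C = 1 := Units.ext (by
        show C.val = 1
        rw [← sub_eq_zero]
        exact h0)
      have hABBA : A * B = B * A := by
        have h := hC1
        rw [hC, mul_inv_eq_one, mul_inv_eq_iff_eq_mul] at h
        exact h
      calc A.val * B.val = (A * B).val := (Units.val_mul A B).symm
        _ = (B * A).val := by rw [hABBA]
        _ = B.val * A.val := Units.val_mul B A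
    have hCΓ : PGLmk K C ∈ Γ := by
      rw [hC, _root_.map_mul, _root_.map_mul, _root_.map_mul, map_inv, map_inv, hA, hB]
      exact mul_mem (mul_mem (mul_mem hγ hθ) (inv_mem hγ)) (inv_mem hθ)
    exact no_parabolic p hnorm Γ hΓ (PGLmk K C) hCΓ C rfl N (by rw [hNdef]; abel) hN2 hN0
end

section
/- Let K be a finite extension of ℚ_p and Γ a discrete subgroup of PGL(2,K). Let γ, θ ∈ Γ be nontrivial elements of finite order that have a common fixed point in P¹(K). Then the subgroup ⟨γ, θ⟩ of Γ generated by γ and θ is a finite cyclic group. -/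
open Matrix

/-! ### Auxiliary material -/

section Aux

variable {F : Type} [Field F]

/-- elementary unipotent matrix -/
def Umat (x : F) : GL2 F :=
  ⟨!![1, x; 0, 1], !![1, -x; 0, 1],
    by ext i j; fin_cases i <;> fin_cases j <;>
      simp [Matrix.mul_apply, Fin.sum_univ_two, Matrix.one_apply],
    by ext i j; fin_cases i <;> fin_cases j <;>
      simp [Matrix.mul_apply, Fin.sum_univ_two, Matrix.one_apply]⟩

/-- elementary lower unipotent matrix -/
def Lmat (x : F) : GL2 F :=
  ⟨!![1, 0; x, 1], !![1, 0; -x, 1],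
    by ext i j; fin_cases i <;> fin_cases j <;>
      simp [Matrix.mul_apply, Fin.sum_univ_two, Matrix.one_apply],
    by ext i j; fin_cases i <;> fin_cases j <;>
      simp [Matrix.mul_apply, Fin.sum_univ_two, Matrix.one_apply]⟩

lemma GL2_mem_center_iff {M : GL2 F} :
    M ∈ Subgroup.center (GL2 F) ↔ ∃ c : F, M.val = c • (1 : Matrix (Fin 2) (Fin 2) F) := by
  constructor
  · intro h
    rw [Subgroup.mem_center_iff] at h
    have h1 := congrArg Units.val (h (Umat 1))
    have h2 := congrArg Units.val (h (Lmat 1))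
    simp only [Units.val_mul] at h1 h2
    refine ⟨M.val 0 0, ?_⟩
    have e1 := congrFun (congrFun h1 0) 0
    have e2 := congrFun (congrFun h1 0) 1
    have f1 := congrFun (congrFun h2 0) 0
    simp [Umat, Lmat, Matrix.mul_apply, Fin.sum_univ_two] at e1 e2 f1
    ext i j
    fin_cases i <;> fin_cases j <;> simp [Matrix.one_apply]
    · exact f1
    · exact e1
    · linear_combination e2
  · rintro ⟨c, hc⟩
    rw [Subgroup.mem_center_iff]
    intro g
    ext : 1
    rw [Units.val_mul, Units.val_mul, hc, smul_mul_assoc, mul_smul_comm, one_mul, mul_one]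

lemma PGLmk_eq_one_iff_s6 {A : GL2 F} :
    PGLmk F A = 1 ↔ ∃ c : F, A.val = c • (1 : Matrix (Fin 2) (Fin 2) F) := by
  rw [show PGLmk F A = ((A : GL2 F) : PGL2 F) from rfl, QuotientGroup.eq_one_iff]
  exact GL2_mem_center_iff

lemma PGLmk_eq_iff {A B : GL2 F} :
    PGLmk F A = PGLmk F B ↔ ∃ c : F, A.val = c • B.val := by
  constructor
  · intro h
    have h' : PGLmk F (B⁻¹ * A) = 1 := by
      rw [MonoidHom.map_mul, h, MonoidHom.map_inv, inv_mul_cancel]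
    obtain ⟨c, hc⟩ := PGLmk_eq_one_iff_s6.mp h'
    simp only [Units.val_mul] at hc
    refine ⟨c, ?_⟩
    calc A.val = B.val * ((B⁻¹).val * A.val) := by
          rw [← Matrix.mul_assoc, ← Units.val_mul, mul_inv_cancel, Units.val_one, Matrix.one_mul]
      _ = c • B.val := by rw [hc, mul_smul_comm, Matrix.mul_one]
  · rintro ⟨c, hc⟩
    have h' : (B⁻¹ * A).val = c • (1 : Matrix (Fin 2) (Fin 2) F) := by
      rw [Units.val_mul, hc, mul_smul_comm, ← Units.val_mul, inv_mul_cancel, Units.val_one]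
    have h1 : PGLmk F (B⁻¹ * A) = 1 := PGLmk_eq_one_iff_s6.mpr ⟨c, h'⟩
    rw [MonoidHom.map_mul, MonoidHom.map_inv] at h1
    calc PGLmk F A = (PGLmk F B) * ((PGLmk F B)⁻¹ * PGLmk F A) := by group
      _ = PGLmk F B := by rw [h1, mul_one]

lemma GL2.mulVec_ne_zero (A : GL2 F) {v : Fin 2 → F} (hv : v ≠ 0) : A.val *ᵥ v ≠ 0 := by
  intro h
  exact hv ((Matrix.GeneralLinearGroup.toLin A).toLinearEquiv.map_eq_zero_iff.mp h)

lemma projAct_mk (A : GL2 F) (v : Fin 2 → F) (hv : v ≠ 0) :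
    projAct A (Projectivization.mk F v hv) =
      Projectivization.mk F (A.val *ᵥ v) (GL2.mulVec_ne_zero A hv) := rfl

lemma projAct_mul (A B : GL2 F) (x : Projectivization F (Fin 2 → F)) :
    projAct (A * B) x = projAct A (projAct B x) := by
  induction x using Projectivization.ind with
  | h v hv =>
    rw [projAct_mk, projAct_mk, projAct_mk]
    congr 1
    rw [Units.val_mul, ← Matrix.mulVec_mulVec]

lemma projAct_congr {A B : GL2 F} (h : PGLmk F A = PGLmk F B)
    (x : Projectivization F (Fin 2 → F)) : projAct A x = projAct B x := by
  obtain ⟨c, hc⟩ := PGLmk_eq_iff.mp h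
  induction x using Projectivization.ind with
  | h v hv =>
    rw [projAct_mk, projAct_mk, Projectivization.mk_eq_mk_iff']
    exact ⟨c, by rw [hc, Matrix.smul_mulVec]⟩

lemma projAct_one (x : Projectivization F (Fin 2 → F)) : projAct (1 : GL2 F) x = x := by
  induction x using Projectivization.ind with
  | h v hv =>
    rw [projAct_mk]
    congr 1
    rw [Units.val_one, Matrix.one_mulVec]

/-- the stabilizer of `x` as a subgroup of `PGL2` -/
def stab (x : Projectivization F (Fin 2 → F)) : Subgroup (PGL2 F) where
  carrier := {g | FixedPt g x}
  one_mem' := by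
    intro A hA
    have : PGLmk F A = PGLmk F 1 := by rwa [MonoidHom.map_one]
    rw [projAct_congr this, projAct_one]
  mul_mem' := by
    intro g h hg hh A hA
    obtain ⟨B, hB⟩ := QuotientGroup.mk'_surjective (Subgroup.center (GL2 F)) g
    obtain ⟨C, hC⟩ := QuotientGroup.mk'_surjective (Subgroup.center (GL2 F)) h
    have hBC : PGLmk F (B * C) = g * h := by
      rw [MonoidHom.map_mul]; rw [show PGLmk F B = g from hB, show PGLmk F C = h from hC]
    rw [projAct_congr (hA.trans hBC.symm), projAct_mul, hh C hC, hg B hB]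
  inv_mem' := by
    intro g hg A hA
    obtain ⟨B, hB⟩ := QuotientGroup.mk'_surjective (Subgroup.center (GL2 F)) g
    have hBA : PGLmk F (B * A) = 1 := by
      rw [MonoidHom.map_mul, show PGLmk F B = g from hB, hA, mul_inv_cancel]
    have h1 : projAct (B * A) x = x := by
      rw [projAct_congr (by rw [hBA, MonoidHom.map_one] : PGLmk F (B * A) = PGLmk F 1),
        projAct_one]
    rw [projAct_mul] at h1
    have hinj : Function.Injective (projAct B) :=
      Projectivization.map_injective _ _
    have h2 : projAct B x = x := hg B hB
    exact hinj (h1.trans h2.symm)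

open scoped Classical in
/-- a matrix whose first column is the nonzero vector `v` -/
noncomputable def Qmat {v : Fin 2 → F} (hv : v ≠ 0) : GL2 F :=
  Matrix.GeneralLinearGroup.mkOfDetNeZero
    (if h : v 0 = 0 then !![v 0, 1; v 1, 0] else !![v 0, 0; v 1, 1])
    (by
      rcases eq_or_ne (v 0) 0 with h | h
      · have h1 : v 1 ≠ 0 := by
          intro h1
          apply hv
          funext i
          fin_cases i <;> simp [h, h1]
        simp [h, Matrix.det_fin_two_of, h1]
      · simp [h, Matrix.det_fin_two_of])

open scoped Classical in
lemma Qmat_mulVec_e0 {v : Fin 2 → F} (hv : v ≠ 0) : (Qmat hv).val *ᵥ ![1, 0] = v := by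
  funext i
  rcases eq_or_ne (v 0) 0 with h | h <;>
    fin_cases i <;>
    simp [Qmat, Matrix.GeneralLinearGroup.mkOfDetNeZero, Matrix.GeneralLinearGroup.mk',
      Matrix.unitOfDetInvertible, h, Matrix.mulVec, dotProduct, Fin.sum_univ_two]

lemma Qmat_inv_mulVec {v : Fin 2 → F} (hv : v ≠ 0) :
    ((Qmat hv)⁻¹).val *ᵥ v = ![1, 0] := by
  have h : ((Qmat hv)⁻¹).val *ᵥ ((Qmat hv).val *ᵥ ![1, 0]) = ![1, 0] := by
    rw [Matrix.mulVec_mulVec, ← Units.val_mul, inv_mul_cancel, Units.val_one, Matrix.one_mulVec]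
  rwa [Qmat_mulVec_e0 hv] at h

lemma stab_triangular {v : Fin 2 → F} {hv : v ≠ 0} {g : PGL2 F}
    (hg : FixedPt g (Projectivization.mk F v hv)) (A : GL2 F) (hA : PGLmk F A = g) :
    ((Qmat hv)⁻¹ * A * Qmat hv).val 1 0 = 0 ∧
    ((Qmat hv)⁻¹ * A * Qmat hv).val 0 0 ≠ 0 ∧
    ((Qmat hv)⁻¹ * A * Qmat hv).val 1 1 ≠ 0 := by
  have hfix := hg A hA
  rw [projAct_mk, Projectivization.mk_eq_mk_iff] at hfix
  obtain ⟨a, ha⟩ := hfix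
  rw [Units.smul_def] at ha
  set M := ((Qmat hv)⁻¹ * A * Qmat hv).val with hM
  have key : M *ᵥ ![1, 0] = (a : F) • ![1, 0] := by
    rw [hM, Units.val_mul, Units.val_mul, ← Matrix.mulVec_mulVec, ← Matrix.mulVec_mulVec,
      Qmat_mulVec_e0 hv, ← ha, Matrix.mulVec_smul, Qmat_inv_mulVec hv]
  have k0 := congrFun key 0
  have k1 := congrFun key 1
  simp [Matrix.mulVec, dotProduct, Fin.sum_univ_two] at k0 k1
  have h10 : M 1 0 = 0 := k1
  have h00 : M 0 0 = (a : F) := k0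
  refine ⟨h10, by rw [h00]; exact a.ne_zero, ?_⟩
  have hdet : IsUnit M.det := by
    rw [← Matrix.isUnit_iff_isUnit_det]
    exact ((Qmat hv)⁻¹ * A * Qmat hv).isUnit
  rw [Matrix.det_fin_two, h10, mul_zero, sub_zero, isUnit_iff_ne_zero, mul_ne_zero_iff] at hdet
  exact hdet.2

noncomputable def pglLift (g : PGL2 F) : GL2 F :=
  (QuotientGroup.mk'_surjective (Subgroup.center (GL2 F)) g).choose

lemma pglLift_spec (g : PGL2 F) : PGLmk F (pglLift g) = g :=
  (QuotientGroup.mk'_surjective (Subgroup.center (GL2 F)) g).choose_spec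

/-- the "eigenvalue ratio" of a matrix conjugated into triangular form -/
noncomputable def rconj (Q A : GL2 F) : F :=
  ((Q⁻¹ * A * Q).val 0 0) / ((Q⁻¹ * A * Q).val 1 1)

lemma GL2_smul_ne_zero {A B : GL2 F} {c : F} (hc : A.val = c • B.val) : c ≠ 0 := by
  intro h
  rw [h, zero_smul] at hc
  have := congrFun (congrFun (A.inv_mul) 0) 0
  rw [hc] at this
  simp [Matrix.mul_apply, Matrix.one_apply] at this

lemma conj_val_smul {Q A B : GL2 F} {c : F} (hc : A.val = c • B.val) :
    (Q⁻¹ * A * Q).val = c • (Q⁻¹ * B * Q).val := by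
  simp only [Units.val_mul, hc, mul_smul_comm, smul_mul_assoc]

lemma rconj_congr (Q : GL2 F) {A B : GL2 F} (h : PGLmk F A = PGLmk F B) :
    rconj Q A = rconj Q B := by
  obtain ⟨c, hc⟩ := PGLmk_eq_iff.mp h
  have hc0 : c ≠ 0 := GL2_smul_ne_zero hc
  unfold rconj
  rw [conj_val_smul hc]
  simp only [Matrix.smul_apply, smul_eq_mul]
  rw [mul_div_mul_left _ _ hc0]

lemma conj_mul_conj (Q A B : GL2 F) :
    Q⁻¹ * (A * B) * Q = (Q⁻¹ * A * Q) * (Q⁻¹ * B * Q) := by group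

lemma rconj_mul (Q : GL2 F) {A B : GL2 F}
    (hA10 : (Q⁻¹ * A * Q).val 1 0 = 0) (hB10 : (Q⁻¹ * B * Q).val 1 0 = 0) :
    rconj Q (A * B) = rconj Q A * rconj Q B := by
  unfold rconj
  rw [conj_mul_conj, Units.val_mul]
  rw [Matrix.mul_apply, Matrix.mul_apply, Fin.sum_univ_two, Fin.sum_univ_two, hB10, hA10]
  rw [mul_zero, add_zero, zero_mul, zero_add, div_mul_div_comm]

lemma rconj_one (Q : GL2 F) : rconj Q (1 : GL2 F) = 1 := by
  unfold rconj
  rw [mul_one, inv_mul_cancel]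
  simp [Matrix.one_apply]

lemma Umat_zero : Umat (0 : F) = 1 := by
  ext i j
  fin_cases i <;> fin_cases j <;> simp [Umat, Matrix.one_apply]

lemma Umat_add (x y : F) : Umat (x + y) = Umat x * Umat y := by
  ext i j
  fin_cases i <;> fin_cases j <;>
    simp [Umat, Units.val_mul, Matrix.mul_apply, Fin.sum_univ_two] <;> ring

def UmatMHom : Multiplicative F →* GL2 F where
  toFun x := Umat (Multiplicative.toAdd x)
  map_one' := Umat_zero
  map_mul' _ _ := Umat_add _ _

lemma Umat_zsmul (m : ℤ) (x : F) : Umat (m • x) = (Umat x) ^ m := by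
  have h := map_zpow UmatMHom (Multiplicative.ofAdd x) m
  have h2 : Multiplicative.ofAdd x ^ m = Multiplicative.ofAdd (m • x) := by
    rw [← ofAdd_zsmul]
  rw [h2] at h
  exact h

lemma wpow (Q : GL2 F) (x : F) (m : ℤ) :
    (PGLmk F (Q * Umat x * Q⁻¹)) ^ m = PGLmk F (Q * Umat (m • x) * Q⁻¹) := by
  have h1 : ∀ y : F, Q * Umat y * Q⁻¹ = (MulAut.conj Q) (Umat y) := fun y => rfl
  rw [h1, h1, Umat_zsmul, map_zpow, map_zpow]

lemma PGLmk_conj_Umat_eq_one_iff (Q : GL2 F) (x : F) :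
    PGLmk F (Q * Umat x * Q⁻¹) = 1 ↔ x = 0 := by
  constructor
  · intro h
    obtain ⟨c, hc⟩ := PGLmk_eq_one_iff_s6.mp h
    have hU : (Umat x).val = c • (1 : Matrix (Fin 2) (Fin 2) F) := by
      have : Umat x = Q⁻¹ * (Q * Umat x * Q⁻¹) * Q := by group
      rw [this]
      simp only [Units.val_mul, hc, mul_smul_comm, smul_mul_assoc, Matrix.mul_one]
      rw [← Units.val_mul, inv_mul_cancel, Units.val_one]
    have h01 := congrFun (congrFun hU 0) 1
    simp [Umat, Matrix.one_apply] at h01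
    exact h01
  · intro h
    rw [h, Umat_zero, mul_one, mul_inv_cancel, MonoidHom.map_one]

def sGL (c : Fˣ) : GL2 F :=
  ⟨c.val • 1, (c⁻¹).val • 1,
    by rw [smul_mul_assoc, mul_smul_comm, Matrix.mul_one, smul_smul, Units.mul_inv, one_smul],
    by rw [smul_mul_assoc, mul_smul_comm, Matrix.mul_one, smul_smul, Units.inv_mul, one_smul]⟩

lemma PGLmk_sGL (c : Fˣ) : PGLmk F (sGL c) = 1 := PGLmk_eq_one_iff_s6.mpr ⟨c.val, rfl⟩

lemma triangular_factor {M : GL2 F} (h10 : M.val 1 0 = 0) (heq : M.val 0 0 = M.val 1 1)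
    (h00 : M.val 0 0 ≠ 0) :
    M = sGL (Units.mk0 (M.val 0 0) h00) * Umat (M.val 0 1 / M.val 0 0) := by
  ext i j
  fin_cases i <;> fin_cases j <;>
    simp [sGL, Umat, Units.val_mul, Matrix.mul_apply, Fin.sum_univ_two, Matrix.one_apply,
      Matrix.smul_apply, h10, ← heq] <;>
    field_simp

lemma commutator_eq {X Y : GL2 F} (hX10 : X.val 1 0 = 0) (hY10 : Y.val 1 0 = 0)
    (hX11 : X.val 1 1 ≠ 0) (hY11 : Y.val 1 1 ≠ 0) :
    X * Y = Umat ((X.val 0 0 * Y.val 0 1 + X.val 0 1 * Y.val 1 1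
        - (Y.val 0 0 * X.val 0 1 + Y.val 0 1 * X.val 1 1)) / (X.val 1 1 * Y.val 1 1))
      * (Y * X) := by
  ext i j
  fin_cases i <;> fin_cases j <;>
    [skip; skip; skip; skip] <;>
    (try simp [Umat, Units.val_mul, Matrix.mul_apply, Fin.sum_univ_two, hX10, hY10]) <;>
    (try field_simp) <;> (try ring)

end Aux

section Topology

variable {K : Type} [NormedField K]

lemma continuous_Umat : Continuous (fun x : K => Umat x) := by
  rw [Units.continuous_iff]
  constructor
  · apply continuous_matrix
    intro i j
    fin_cases i <;> fin_cases j <;> simp [Umat] <;> fun_prop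
  · apply continuous_matrix
    intro i j
    fin_cases i <;> fin_cases j <;> simp [Umat] <;> fun_prop

lemma continuous_wfun (Q : GL2 K) :
    Continuous (fun x : K => PGLmk K (Q * Umat x * Q⁻¹)) := by
  apply Continuous.comp
  · exact continuous_quotient_mk'
  · exact (continuous_const.mul continuous_Umat).mul continuous_const

lemma discrete_forces_zero (p : ℕ) [Fact p.Prime] (K : Type) [NormedField K]
    [Algebra ℚ_[p] K] [FiniteDimensional ℚ_[p] K]
    (hnorm : ∀ x : ℚ_[p], ‖algebraMap ℚ_[p] K x‖ = ‖x‖)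
    (Γ : Subgroup (PGL2 K)) (hΓ : DiscreteTopology Γ)
    (Q : GL2 K) (c : K)
    (hmem : ∀ m : ℤ, PGLmk K (Q * Umat (m • c) * Q⁻¹) ∈ Γ) : c = 0 := by
  by_contra hc
  haveI : CharZero K := charZero_of_injective_algebraMap (algebraMap ℚ_[p] K).injective
  letI : NormedSpace ℚ_[p] K :=
    { norm_smul_le := fun q k => le_of_eq (by rw [Algebra.smul_def, norm_mul, hnorm]) }
  haveI : ProperSpace K := FiniteDimensional.proper ℚ_[p] K
  set seq : ℕ → K := fun n => (n : K) * c with hseq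
  have hball : ∀ n, seq n ∈ Metric.closedBall (0 : K) ‖c‖ := by
    intro n
    rw [Metric.mem_closedBall, dist_zero_right, hseq]
    calc ‖(n : K) * c‖ = ‖(n : K)‖ * ‖c‖ := norm_mul _ _
      _ ≤ 1 * ‖c‖ := by
          apply mul_le_mul_of_nonneg_right _ (norm_nonneg c)
          have hcast : (n : K) = algebraMap ℚ_[p] K ((n : ℚ_[p])) := (map_natCast _ n).symm
          rw [hcast, hnorm]
          have := Padic.norm_int_le_one (p := p) (n : ℤ)
          push_cast at this
          exact this
      _ = ‖c‖ := one_mul _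
  obtain ⟨L, _, φ, hφ, hconv⟩ :=
    (isCompact_closedBall (0 : K) ‖c‖).tendsto_subseq hball
  set d : ℕ → K := fun k => seq (φ (k + 1)) - seq (φ k) with hd
  have hd0 : Filter.Tendsto d Filter.atTop (nhds 0) := by
    have h1 : Filter.Tendsto (fun k => seq (φ (k + 1))) Filter.atTop (nhds L) :=
      hconv.comp (Filter.tendsto_add_atTop_nat 1)
    simpa using h1.sub hconv
  have hdm : ∀ k, d k = ((φ (k + 1) : ℤ) - (φ k : ℤ)) • c := by
    intro k
    rw [hd, zsmul_eq_mul, hseq]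
    push_cast
    ring
  have hdne : ∀ k, d k ≠ 0 := by
    intro k
    rw [hdm k]
    apply smul_ne_zero _ hc
    have h := hφ (Nat.lt_succ_self (n := k))
    have h2 : φ k < φ (k + 1) := h
    omega
  have hgk : ∀ k, PGLmk K (Q * Umat (d k) * Q⁻¹) ∈ Γ := by
    intro k
    rw [hdm k]
    exact hmem _
  have htend : Filter.Tendsto (fun k => PGLmk K (Q * Umat (d k) * Q⁻¹)) Filter.atTop
      (nhds (1 : PGL2 K)) := by
    have := ((continuous_wfun Q).tendsto 0).comp hd0
    simpa [Function.comp_def, Umat_zero, mul_inv_cancel] using this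
  have hopen : IsOpen ({⟨1, Γ.one_mem⟩} : Set ↥Γ) := isOpen_discrete _
  rw [isOpen_induced_iff] at hopen
  obtain ⟨U, hU, hUeq⟩ := hopen
  have h1U : (1 : PGL2 K) ∈ U := by
    have : (⟨1, Γ.one_mem⟩ : ↥Γ) ∈ (Subtype.val ⁻¹' U : Set ↥Γ) := by
      rw [hUeq]; rfl
    exact this
  have hev := htend.eventually (hU.eventually_mem h1U)
  obtain ⟨k, hk⟩ := hev.exists
  have : (⟨_, hgk k⟩ : ↥Γ) ∈ (Subtype.val ⁻¹' U : Set ↥Γ) := hk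
  rw [hUeq] at this
  have h1 : PGLmk K (Q * Umat (d k) * Q⁻¹) = 1 := congrArg Subtype.val this
  exact hdne k ((PGLmk_conj_Umat_eq_one_iff Q (d k)).mp h1)

end Topology

theorem stmt6 (p : ℕ) [Fact p.Prime] (K : Type) [NormedField K] [Algebra ℚ_[p] K]
    [FiniteDimensional ℚ_[p] K]
    (hnorm : ∀ x : ℚ_[p], ‖algebraMap ℚ_[p] K x‖ = ‖x‖)
    (Γ : Subgroup (PGL2 K)) (hΓ : DiscreteTopology Γ)
    (γ θ : PGL2 K) (hγ : γ ∈ Γ) (hθ : θ ∈ Γ) (hγ1 : γ ≠ 1) (hθ1 : θ ≠ 1)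
    (hγfin : IsOfFinOrder γ) (hθfin : IsOfFinOrder θ)
    (hcommon : ∃ x : Projectivization K (Fin 2 → K), FixedPt γ x ∧ FixedPt θ x) :
    Finite ↥(Subgroup.closure ({γ, θ} : Set (PGL2 K))) ∧
      IsCyclic ↥(Subgroup.closure ({γ, θ} : Set (PGL2 K))) := by
  haveI : CharZero K := charZero_of_injective_algebraMap (algebraMap ℚ_[p] K).injective
  obtain ⟨x, hγx, hθx⟩ := hcommon
  obtain ⟨v, hv, rfl⟩ : ∃ (v : Fin 2 → K) (hv : v ≠ 0), x = Projectivization.mk K v hv := by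
    induction x using Projectivization.ind with
    | h v hv => exact ⟨v, hv, rfl⟩
  set G := Subgroup.closure ({γ, θ} : Set (PGL2 K)) with hGdef
  set Q : GL2 K := Qmat hv with hQdef
  have hγG : γ ∈ G := Subgroup.subset_closure (by simp)
  have hθG : θ ∈ G := Subgroup.subset_closure (by simp)
  have hGΓ : G ≤ Γ := by
    rw [hGdef, Subgroup.closure_le]
    intro g hg
    rcases hg with rfl | hg
    · exact hγ
    · rw [Set.mem_singleton_iff] at hg; subst hg; exact hθ
  have hGstab : ∀ {g : PGL2 K}, g ∈ G → FixedPt g (Projectivization.mk K v hv) := by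
    intro g hg
    have hle : G ≤ stab (Projectivization.mk K v hv) := by
      rw [hGdef, Subgroup.closure_le]
      intro a ha
      rcases ha with rfl | ha
      · exact hγx
      · rw [Set.mem_singleton_iff] at ha; subst ha; exact hθx
    exact hle hg
  -- lifts of the generators
  obtain ⟨hA10, hA00, hA11⟩ := stab_triangular (hGstab hγG) (pglLift γ) (pglLift_spec γ)
  obtain ⟨hB10, hB00, hB11⟩ := stab_triangular (hGstab hθG) (pglLift θ) (pglLift_spec θ)
  set A : GL2 K := pglLift γ with hAdef
  set B : GL2 K := pglLift θ with hBdef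
  have hAspec : PGLmk K A = γ := pglLift_spec γ
  have hBspec : PGLmk K B = θ := pglLift_spec θ
  -- the commutator is an elementary unipotent conjugated by Q
  obtain ⟨c0, hXY⟩ : ∃ c : K, (Q⁻¹ * A * Q) * (Q⁻¹ * B * Q)
      = Umat c * ((Q⁻¹ * B * Q) * (Q⁻¹ * A * Q)) :=
    ⟨_, commutator_eq hA10 hB10 hA11 hB11⟩
  have key : A * B = (Q * Umat c0 * Q⁻¹) * (B * A) := by
    calc A * B = Q * ((Q⁻¹ * A * Q) * (Q⁻¹ * B * Q)) * Q⁻¹ := by group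
      _ = Q * (Umat c0 * ((Q⁻¹ * B * Q) * (Q⁻¹ * A * Q))) * Q⁻¹ := by rw [hXY]
      _ = (Q * Umat c0 * Q⁻¹) * (B * A) := by group
  have hwc : PGLmk K (Q * Umat c0 * Q⁻¹) = (γ * θ) * (θ * γ)⁻¹ := by
    have h := congrArg (PGLmk K) key
    rw [MonoidHom.map_mul (PGLmk K) (Q * Umat c0 * Q⁻¹) (B * A)] at h
    rw [MonoidHom.map_mul, hAspec, hBspec] at h
    rw [MonoidHom.map_mul (PGLmk K) B A, hBspec, hAspec] at h
    rw [h, mul_inv_cancel_right]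
  have hmem : ∀ m : ℤ, PGLmk K (Q * Umat (m • c0) * Q⁻¹) ∈ Γ := by
    intro m
    rw [← wpow]
    apply hGΓ
    apply Subgroup.zpow_mem
    rw [hwc]
    exact mul_mem (mul_mem hγG hθG) (inv_mem (mul_mem hθG hγG))
  have hc0 : c0 = 0 := discrete_forces_zero p K hnorm Γ hΓ Q c0 hmem
  have hABcomm : A * B = B * A := by
    rw [key, hc0, Umat_zero, mul_one, mul_inv_cancel, one_mul]
  have hcomm : Commute γ θ := by
    have h := congrArg (PGLmk K) hABcomm
    rw [MonoidHom.map_mul, MonoidHom.map_mul, hAspec, hBspec] at h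
    exact h
  -- every element of G is of the form γ^i * θ^j
  have hrep : ∀ g ∈ G, ∃ i j : ℤ, g = γ ^ i * θ ^ j := by
    intro g hg
    let Hsub : Subgroup (PGL2 K) :=
      { carrier := {g | ∃ i j : ℤ, g = γ ^ i * θ ^ j}
        one_mem' := ⟨0, 0, by simp⟩
        mul_mem' := by
          rintro a b ⟨i, j, rfl⟩ ⟨k, l, rfl⟩
          refine ⟨i + k, j + l, ?_⟩
          have hx : θ ^ j * γ ^ k = γ ^ k * θ ^ j := (hcomm.symm.zpow_zpow j k).eq
          rw [_root_.zpow_add, _root_.zpow_add, mul_assoc, ← mul_assoc (θ ^ j), hx, mul_assoc, ← mul_assoc]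
        inv_mem' := by
          rintro a ⟨i, j, rfl⟩
          refine ⟨-i, -j, ?_⟩
          have hx : θ ^ (-j) * γ ^ (-i) = γ ^ (-i) * θ ^ (-j) :=
            (hcomm.symm.zpow_zpow (-j) (-i)).eq
          rw [_root_.mul_inv_rev, ← _root_.zpow_neg, ← _root_.zpow_neg, hx] }
    have hle : G ≤ Hsub := by
      rw [hGdef, Subgroup.closure_le]
      intro a ha
      rcases ha with rfl | ha
      · exact ⟨1, 0, by simp⟩
      · rw [Set.mem_singleton_iff] at ha; subst ha; exact ⟨0, 1, by simp⟩
    exact hle hg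
  -- finiteness
  have hfinγ : (Subgroup.zpowers γ : Set (PGL2 K)).Finite := by
    rw [← hγfin.powers_eq_zpowers]; exact hγfin.finite_powers
  have hfinθ : (Subgroup.zpowers θ : Set (PGL2 K)).Finite := by
    rw [← hθfin.powers_eq_zpowers]; exact hθfin.finite_powers
  have hGsub : (G : Set (PGL2 K)) ⊆
      Set.image2 (· * ·) (Subgroup.zpowers γ : Set (PGL2 K))
        (Subgroup.zpowers θ : Set (PGL2 K)) := by
    intro g hg
    obtain ⟨i, j, rfl⟩ := hrep g hg
    exact Set.mem_image2_of_mem ⟨i, rfl⟩ ⟨j, rfl⟩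
  have hGsetfin : (G : Set (PGL2 K)).Finite :=
    (Set.Finite.image2 _ hfinγ hfinθ).subset hGsub
  haveI hGfin : Finite ↥G := hGsetfin.to_subtype
  refine ⟨hGfin, ?_⟩
  -- the eigenvalue-ratio homomorphism into K
  have hmul' : ∀ a b : ↥G,
      rconj Q (pglLift ((a * b : ↥G) : PGL2 K)) =
        rconj Q (pglLift (a : PGL2 K)) * rconj Q (pglLift (b : PGL2 K)) := by
    intro a b
    have h1 : PGLmk K (pglLift ((a : PGL2 K) * (b : PGL2 K)))
        = PGLmk K (pglLift (a : PGL2 K) * pglLift (b : PGL2 K)) := by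
      rw [pglLift_spec, MonoidHom.map_mul, pglLift_spec, pglLift_spec]
    have h2 := rconj_congr Q h1
    have ht1 := stab_triangular (hGstab a.2) (pglLift (a : PGL2 K)) (pglLift_spec _)
    have ht2 := stab_triangular (hGstab b.2) (pglLift (b : PGL2 K)) (pglLift_spec _)
    calc rconj Q (pglLift ((a * b : ↥G) : PGL2 K))
        = rconj Q (pglLift (a : PGL2 K) * pglLift (b : PGL2 K)) := h2
      _ = rconj Q (pglLift (a : PGL2 K)) * rconj Q (pglLift (b : PGL2 K)) :=
          rconj_mul Q ht1.1 ht2.1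
  let f : ↥G →* K :=
    { toFun := fun g => rconj Q (pglLift (g : PGL2 K))
      map_one' := by
        show rconj Q (pglLift ((1 : ↥G) : PGL2 K)) = 1
        have h1 : PGLmk K (pglLift ((1 : ↥G) : PGL2 K)) = PGLmk K (1 : GL2 K) := by
          rw [pglLift_spec, MonoidHom.map_one]; rfl
        rw [rconj_congr Q h1, rconj_one]
      map_mul' := hmul' }
  -- values of f are nonzero
  have hfne : ∀ g : ↥G, f g ≠ 0 := by
    intro g
    have ht := stab_triangular (hGstab g.2) (pglLift (g : PGL2 K)) (pglLift_spec _)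
    exact div_ne_zero ht.2.1 ht.2.2
  -- kernel of f is trivial
  have hker : ∀ g : ↥G, f g = 1 → g = 1 := by
    intro g hfg
    have ht := stab_triangular (hGstab g.2) (pglLift (g : PGL2 K)) (pglLift_spec _)
    set a : GL2 K := pglLift (g : PGL2 K) with hadef
    obtain ⟨h10, h00, h11⟩ := ht
    have heq : (Q⁻¹ * a * Q).val 0 0 = (Q⁻¹ * a * Q).val 1 1 := by
      have hdiv : (Q⁻¹ * a * Q).val 0 0 / (Q⁻¹ * a * Q).val 1 1 = 1 := hfg
      rwa [div_eq_one_iff_eq h11] at hdiv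
    have hfact := triangular_factor h10 heq h00
    set y : K := (Q⁻¹ * a * Q).val 0 1 / (Q⁻¹ * a * Q).val 0 0 with hydef
    have hgw : (g : PGL2 K) = PGLmk K (Q * Umat y * Q⁻¹) := by
      have h1 : a = Q * (Q⁻¹ * a * Q) * Q⁻¹ := by group
      have h2 : PGLmk K a = PGLmk K (Q * (Q⁻¹ * a * Q) * Q⁻¹) := congrArg _ h1
      rw [hfact] at h2
      calc (g : PGL2 K) = PGLmk K a := (pglLift_spec _).symm
        _ = PGLmk K (Q * Umat y * Q⁻¹) := h2.trans (by
            simp only [MonoidHom.map_mul, PGLmk_sGL, one_mul])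
    have hford : IsOfFinOrder (g : PGL2 K) :=
      G.subtype.isOfFinOrder (isOfFinOrder_of_finite g)
    obtain ⟨n, hn, hgn⟩ := isOfFinOrder_iff_pow_eq_one.mp hford
    have hzn : ((g : PGL2 K)) ^ (n : ℤ) = 1 := by
      rw [zpow_natCast]; exact hgn
    rw [hgw, wpow] at hzn
    have hy0 : (n : ℤ) • y = 0 := (PGLmk_conj_Umat_eq_one_iff _ _).mp hzn
    have hyzero : y = 0 := by
      rcases smul_eq_zero.mp hy0 with h | h
      · exact absurd h (by exact_mod_cast hn.ne')
      · exact h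
    have : (g : PGL2 K) = 1 := by
      rw [hgw, hyzero, Umat_zero, mul_one, mul_inv_cancel, MonoidHom.map_one]
    exact Subtype.ext this
  have hinj : Function.Injective f := by
    intro a b hab
    have h1 : f (a * b⁻¹) * f b = f a := by
      rw [← MonoidHom.map_mul, inv_mul_cancel_right]
    rw [hab] at h1
    have h2 : f (a * b⁻¹) = 1 := by
      have := mul_right_cancel₀ (hfne b) (h1.trans (one_mul (f b)).symm)
      exact this
    have h3 : a * b⁻¹ = 1 := hker _ h2
    calc a = a * b⁻¹ * b := by rw [inv_mul_cancel_right]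
      _ = b := by rw [h3, one_mul]
  exact isCyclic_of_subgroup_isDomain f hinj
end
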